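/- Let (Ω, 𝔽, P) be a probability space, p ∈ ℕ, let C, R : Ω → (Fin p → ℝ) be random vectors with square-integrable components, and for each i let q_i : ℝ → ℝ be measurable and square-integrable on (0,1). Define the p×p matrices: Σ_CC with entries Cov(C_i, C_j), Σ_RR with entries Cov(R_i, R_j), Σ_CR with entries Cov(C_i, R_j), Σ_RC = Σ_CRᵀ, Ψ = diagonal(i ↦ ∫₀¹ q_i(t) dt), and 𝔈 with entries 𝔈_{ij} = ∫₀¹ q_i(t)q_j(t) dt. Let Σ_B be the p×p matrix with entries [Σ_B]_{ij} = E[ ∫₀¹ ( (C_i − E C_i) + ((R_i − E R_i)/2)q_i(t) )·( (C_j − E C_j) + ((R_j − E R_j)/2)q_j(t) ) dt ]. Then Σ_B = Σ_CC + (1/4)·(𝔈 ⊙ Σ_RR) + (1/2)·Σ_CR·Ψ + (1/2)·Ψ·Σ_RC, where ⊙ denotes the Schur (Hadamard, entrywise) product of matrices. -/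

import Mathlib

/-! Lebesgue measure on `(0,1)` is a probability measure, so the inner integral of `[Σ_B]ᵢⱼ` is
the mean of a product of two affine functions of `qᵢ` and `qⱼ`: a bilinear expression in the
centred `Cᵢ, Rᵢ/2` and `Cⱼ, Rⱼ/2` with coefficients `1, ∫ qⱼ, ∫ qᵢ, ∫ qᵢ qⱼ`. Taking the
expectation over `Ω` turns each product of centred variables into a covariance, and the four
resulting terms are the `(i,j)` entries of `Σ_CC`, `Σ_CR Ψ`, `Ψ Σ_RC` and `𝔈 ⊙ Σ_RR`. -/

open MeasureTheory Matrix

/-- Covariance of two real random variables. -/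
noncomputable def cov {Ω : Type*} [MeasurableSpace Ω] (P : MeasureTheory.Measure Ω)
    (X Y : Ω → ℝ) : ℝ :=
  ∫ ω, (X ω - ∫ ω', X ω' ∂P) * (Y ω - ∫ ω', Y ω' ∂P) ∂P

instance : IsProbabilityMeasure (volume.restrict (Set.Ioo (0 : ℝ) 1)) :=
  ⟨by simp [Real.volume_Ioo]⟩

section Integrals

variable {α : Type*} [MeasurableSpace α] {μ : Measure α}

theorem integral_add_add_add {f₁ f₂ f₃ f₄ : α → ℝ} (h₁ : Integrable f₁ μ) (h₂ : Integrable f₂ μ)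
    (h₃ : Integrable f₃ μ) (h₄ : Integrable f₄ μ) :
    ∫ x, (f₁ x + f₂ x + f₃ x + f₄ x) ∂μ
      = ∫ x, f₁ x ∂μ + ∫ x, f₂ x ∂μ + ∫ x, f₃ x ∂μ + ∫ x, f₄ x ∂μ := by
  have h₁₂ : Integrable (fun x => f₁ x + f₂ x) μ := h₁.add h₂
  have h₁₂₃ : Integrable (fun x => f₁ x + f₂ x + f₃ x) μ := h₁₂.add h₃
  rw [integral_add h₁₂₃ h₄, integral_add h₁₂ h₃, integral_add h₁ h₂]

theorem integral_affine_mul_affine [IsProbabilityMeasure μ] {f g : α → ℝ} (hf : Integrable f μ)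
    (hg : Integrable g μ) (hfg : Integrable (fun x => f x * g x) μ) (a b c d : ℝ) :
    ∫ x, (a + b * f x) * (c + d * g x) ∂μ
      = a * c + a * d * ∫ x, g x ∂μ + b * c * ∫ x, f x ∂μ + b * d * ∫ x, f x * g x ∂μ := by
  have hexpand : (fun x => (a + b * f x) * (c + d * g x))
      = fun x => a * c + a * d * g x + b * c * f x + b * d * (f x * g x) := by
    funext x; ring
  rw [hexpand, integral_add_add_add (integrable_const _) (hg.const_mul _) (hf.const_mul _)
    (hfg.const_mul _), integral_const, probReal_univ, one_smul, integral_const_mul,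
    integral_const_mul, integral_const_mul]

end Integrals

section Covariance

variable {Ω : Type*} [MeasurableSpace Ω] (P : Measure Ω)

theorem cov_comm (X Y : Ω → ℝ) : cov P X Y = cov P Y X :=
  ProbabilityTheory.covariance_comm X Y

variable {P} [IsProbabilityMeasure P]

theorem integrable_centred_mul {X Y : Ω → ℝ} (hX : MemLp X 2 P) (hY : MemLp Y 2 P) :
    Integrable (fun ω => (X ω - ∫ ω', X ω' ∂P) * (Y ω - ∫ ω', Y ω' ∂P)) P :=
  (hX.sub (memLp_const _)).integrable_mul (hY.sub (memLp_const _))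

theorem integral_integral_barycentre_mul {α : Type*} [MeasurableSpace α] {μ : Measure α}
    [IsProbabilityMeasure μ] {X Y Z W : Ω → ℝ} (hX : MemLp X 2 P) (hY : MemLp Y 2 P)
    (hZ : MemLp Z 2 P) (hW : MemLp W 2 P) {f g : α → ℝ} (hf : Integrable f μ)
    (hg : Integrable g μ) (hfg : Integrable (fun t => f t * g t) μ) :
    ∫ ω, (∫ t, ((X ω - ∫ ω', X ω' ∂P) + (Y ω - ∫ ω', Y ω' ∂P) / 2 * f t)
        * ((Z ω - ∫ ω', Z ω' ∂P) + (W ω - ∫ ω', W ω' ∂P) / 2 * g t) ∂μ) ∂P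
      = cov P X Z + cov P X W * (∫ t, g t ∂μ) / 2 + cov P Y Z * (∫ t, f t ∂μ) / 2
        + cov P Y W * (∫ t, f t * g t ∂μ) / 4 := by
  have hinner : ∀ ω, ∫ t, ((X ω - ∫ ω', X ω' ∂P) + (Y ω - ∫ ω', Y ω' ∂P) / 2 * f t)
        * ((Z ω - ∫ ω', Z ω' ∂P) + (W ω - ∫ ω', W ω' ∂P) / 2 * g t) ∂μ
      = (X ω - ∫ ω', X ω' ∂P) * (Z ω - ∫ ω', Z ω' ∂P)
        + (∫ t, g t ∂μ) / 2 * ((X ω - ∫ ω', X ω' ∂P) * (W ω - ∫ ω', W ω' ∂P))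
        + (∫ t, f t ∂μ) / 2 * ((Y ω - ∫ ω', Y ω' ∂P) * (Z ω - ∫ ω', Z ω' ∂P))
        + (∫ t, f t * g t ∂μ) / 4 * ((Y ω - ∫ ω', Y ω' ∂P) * (W ω - ∫ ω', W ω' ∂P)) := by
    intro ω
    rw [integral_affine_mul_affine hf hg hfg]
    ring
  rw [integral_congr_ae (ae_of_all _ hinner),
    integral_add_add_add (integrable_centred_mul hX hZ)
      ((integrable_centred_mul hX hW).const_mul _) ((integrable_centred_mul hY hZ).const_mul _)
      ((integrable_centred_mul hY hW).const_mul _),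
    integral_const_mul, integral_const_mul, integral_const_mul]
  simp only [cov]
  ring

end Covariance

theorem covB_matrix_eq_general (Ω : Type*) [MeasurableSpace Ω]
    (P : Measure Ω) [IsProbabilityMeasure P] (p : ℕ)
    (C R : Ω → Fin p → ℝ)
    (hC : ∀ i, MemLp (fun ω => C ω i) 2 P)
    (hR : ∀ i, MemLp (fun ω => R ω i) 2 P)
    (q : Fin p → ℝ → ℝ)
    (hq : ∀ i, MemLp (q i) 2 (volume.restrict (Set.Ioo (0:ℝ) 1)))
    (SCC SRR SCR SRC Ψ 𝔈 SB : Matrix (Fin p) (Fin p) ℝ)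
    (hCC : ∀ i j, SCC i j = cov P (fun ω => C ω i) (fun ω => C ω j))
    (hRR : ∀ i j, SRR i j = cov P (fun ω => R ω i) (fun ω => R ω j))
    (hCR : ∀ i j, SCR i j = cov P (fun ω => C ω i) (fun ω => R ω j))
    (hRC : SRC = SCRᵀ)
    (hΨ : Ψ = Matrix.diagonal fun i => ∫ t in Set.Ioo (0:ℝ) 1, q i t)
    (h𝔈 : ∀ i j, 𝔈 i j = ∫ t in Set.Ioo (0:ℝ) 1, q i t * q j t)
    (hB : ∀ i j, SB i j = ∫ ω, (∫ t in Set.Ioo (0:ℝ) 1,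
        ((C ω i - ∫ ω', C ω' i ∂P) + (R ω i - ∫ ω', R ω' i ∂P) / 2 * q i t)
          * ((C ω j - ∫ ω', C ω' j ∂P) + (R ω j - ∫ ω', R ω' j ∂P) / 2 * q j t)) ∂P) :
    SB = SCC + (1 / 4 : ℝ) • (Matrix.hadamard 𝔈 SRR)
      + (1 / 2 : ℝ) • (SCR * Ψ) + (1 / 2 : ℝ) • (Ψ * SRC) := by
  ext i j
  rw [hB, integral_integral_barycentre_mul (hC i) (hR i) (hC j) (hR j)
    ((hq i).integrable one_le_two) ((hq j).integrable one_le_two) ((hq i).integrable_mul (hq j))]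
  simp only [Matrix.add_apply, Matrix.smul_apply, hadamard_apply, hΨ, hRC, mul_diagonal,
    diagonal_mul, transpose_apply, smul_eq_mul, hCC, hRR, hCR, h𝔈, cov_comm P (fun ω => R ω i)]
  ring

/-- The barycentre-based covariance matrix of an interval-valued random vector:
`Σ_B = Σ_CC + (1/4)(𝔈 ⊙ Σ_RR) + (1/2)Σ_CR Ψ + (1/2)Ψ Σ_RC`,
where `⊙` is the Schur (Hadamard) product. -/
theorem covB_matrix_eq (Ω : Type*) [MeasurableSpace Ω]
    (P : Measure Ω) [IsProbabilityMeasure P] (p : ℕ)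
    (C R : Ω → Fin p → ℝ)
    (hC : ∀ i, MemLp (fun ω => C ω i) 2 P)
    (hR : ∀ i, MemLp (fun ω => R ω i) 2 P)
    (q : Fin p → ℝ → ℝ)
    (hmeas : ∀ i, Measurable (q i))
    (hq : ∀ i, MemLp (q i) 2 (volume.restrict (Set.Ioo (0:ℝ) 1)))
    (SCC SRR SCR SRC Ψ 𝔈 SB : Matrix (Fin p) (Fin p) ℝ)
    (hCC : ∀ i j, SCC i j = cov P (fun ω => C ω i) (fun ω => C ω j))
    (hRR : ∀ i j, SRR i j = cov P (fun ω => R ω i) (fun ω => R ω j))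
    (hCR : ∀ i j, SCR i j = cov P (fun ω => C ω i) (fun ω => R ω j))
    (hRC : SRC = SCRᵀ)
    (hΨ : Ψ = Matrix.diagonal fun i => ∫ t in Set.Ioo (0:ℝ) 1, q i t)
    (h𝔈 : ∀ i j, 𝔈 i j = ∫ t in Set.Ioo (0:ℝ) 1, q i t * q j t)
    (hB : ∀ i j, SB i j = ∫ ω, (∫ t in Set.Ioo (0:ℝ) 1,
        ((C ω i - ∫ ω', C ω' i ∂P) + (R ω i - ∫ ω', R ω' i ∂P) / 2 * q i t)
          * ((C ω j - ∫ ω', C ω' j ∂P) + (R ω j - ∫ ω', R ω' j ∂P) / 2 * q j t)) ∂P) :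
    SB = SCC + (1 / 4 : ℝ) • (Matrix.hadamard 𝔈 SRR)
      + (1 / 2 : ℝ) • (SCR * Ψ) + (1 / 2 : ℝ) • (Ψ * SRC) :=
  covB_matrix_eq_general Ω P p C R hC hR q hq SCC SRR SCR SRC Ψ 𝔈 SB hCC hRR hCR hRC hΨ h𝔈 hB
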